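/- arXiv:0901.3205 — 3 statements merged into one kernel-verified Lean document; each statement's English description precedes it below -/
import Mathlib

section
/- Let R be an associative unital ℂ-algebra, ε : R → ℂ a ℂ-algebra homomorphism, n ≥ 2, and 1 ≤ i ≠ j ≤ n. Let M be a module over the Lie algebra 𝔤𝔩_n(R), let m ∈ ℕ, and let v ∈ M satisfy: (E_{ji}a)·v = 0 for all a ∈ R; (E_{ii}a − E_{jj}a)·v = m·ε(a)·v for all a ∈ R; and the (m+1)-fold iterated action (E_{ij}1)^{m+1}·v = 0. Then for every P ∈ R with ε(P) = 0, one has (E_{ij}P^m)·v = 0. -/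
/-!
Write `e_k = E_{ij}P^k`, `h_d = E_{ii}P^d - E_{jj}P^d` and `f = E_{ji}P`. Then
`⁅h_d, e_k⁆ = 2 e_{k+d}` and `⁅f, e_k⁆ = -h_{k+1}`, while `f` and every `h_d` with `d ≥ 1` kill `v`
(the latter because `ε(P) = 0`). Hence applying `f` to a monomial `e_{k₁} ⋯ e_{k_s} v` gives `-2`
times a sum, with nonnegative integer coefficients, of monomials with one factor fewer and total
degree one higher; no cancellation can occur. Applying `f` `m` times to `e_0^{m+1} v = 0` therefore
yields `(-2)^m c · e_m v = 0` with `c ≥ 1`, and `M` has no additive torsion.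
-/

namespace CurrentAlgebra

/- A multiset of lists stands for a formal sum of monomials `e_{k₁} ⋯ e_{k_s} v`: `raise d D` is
the result of commuting `h_d` through `D`, and `merge D` that of commuting `f` through `D`
(up to the factors `2` and `-2` respectively). -/
def raise (d : ℕ) : List ℕ → Multiset (List ℕ)
  | [] => 0
  | k :: D => ((k + d) :: D) ::ₘ (raise d D).map (k :: ·)

def merge : List ℕ → Multiset (List ℕ)
  | [] => 0
  | k :: D => (merge D).map (k :: ·) + raise (k + 1) D

theorem length_sum_of_mem_raise {d : ℕ} :
    ∀ {D D' : List ℕ}, D' ∈ raise d D → D'.length = D.length ∧ D'.sum = D.sum + d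
  | [], _, h => by simp [raise] at h
  | k :: D, _, h => by
    simp only [raise, Multiset.mem_cons, Multiset.mem_map] at h
    rcases h with rfl | ⟨D', hD', rfl⟩
    · simp; omega
    · obtain ⟨hlen, hsum⟩ := length_sum_of_mem_raise hD'
      simp [hlen, hsum]; omega

theorem length_sum_of_mem_merge :
    ∀ {D D' : List ℕ}, D' ∈ merge D → D'.length + 1 = D.length ∧ D'.sum = D.sum + 1
  | [], _, h => by simp [merge] at h
  | k :: D, _, h => by
    simp only [merge, Multiset.mem_add, Multiset.mem_map] at h
    rcases h with ⟨D', hD', rfl⟩ | hD'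
    · obtain ⟨hlen, hsum⟩ := length_sum_of_mem_merge hD'
      simp [← hlen, hsum]; omega
    · obtain ⟨hlen, hsum⟩ := length_sum_of_mem_raise hD'
      simp [hlen, hsum]; omega

theorem merge_ne_zero : ∀ {D : List ℕ}, 2 ≤ D.length → merge D ≠ 0
  | a :: b :: D, _ => ne_of_mem_of_not_mem' (a := (b + (a + 1)) :: D) (by simp [merge, raise])
      (Multiset.notMem_zero _)

-- `iterMerge m r` encodes `f^r (e_0^{m+1} v)`, up to the factor `(-2)^r`.
def iterMerge (m r : ℕ) : Multiset (List ℕ) :=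
  (fun S => S.bind merge)^[r] {List.replicate (m + 1) 0}

theorem iterMerge_succ (m r : ℕ) : iterMerge m (r + 1) = (iterMerge m r).bind merge :=
  Function.iterate_succ_apply' _ _ _

theorem iterMerge_spec (m : ℕ) :
    ∀ r ≤ m, iterMerge m r ≠ 0 ∧ ∀ D ∈ iterMerge m r, D.length + r = m + 1 ∧ D.sum = r
  | 0, _ => by simp [iterMerge]
  | r + 1, hr => by
    obtain ⟨hne, hmem⟩ := iterMerge_spec m r (by omega)
    rw [iterMerge_succ]
    refine ⟨?_, fun D hD => ?_⟩
    · obtain ⟨D, hD⟩ := Multiset.exists_mem_of_ne_zero hne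
      have := (hmem D hD).1
      obtain ⟨D', hD'⟩ := Multiset.exists_mem_of_ne_zero (merge_ne_zero (D := D) (by omega))
      exact ne_of_mem_of_not_mem' (Multiset.mem_bind.2 ⟨D, hD, hD'⟩) (Multiset.notMem_zero _)
    · obtain ⟨D', hD', hD⟩ := Multiset.mem_bind.1 hD
      have := hmem D' hD'
      have := length_sum_of_mem_merge hD
      omega

theorem iterMerge_self (m : ℕ) : ∃ c ≠ 0, iterMerge m m = Multiset.replicate c [m] := by
  obtain ⟨hne, hmem⟩ := iterMerge_spec m m le_rfl
  refine ⟨_, mt Multiset.card_eq_zero.1 hne, Multiset.eq_replicate_card.2 fun D hD => ?_⟩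
  obtain ⟨hlen, hsum⟩ := hmem D hD
  obtain ⟨k, rfl⟩ := List.length_eq_one_iff.1 (by omega : D.length = 1)
  simpa using hsum

section LieModule

variable {L M : Type*} [LieRing L] [AddCommGroup M] [LieRingModule L M]

def monomial (e : ℕ → L) (v : M) (D : List ℕ) : M :=
  D.foldr (fun k x => ⁅e k, x⁆) v

def evalSum (e : ℕ → L) (v : M) (S : Multiset (List ℕ)) : M :=
  (S.map (monomial e v)).sum

variable (e : ℕ → L) (v : M)

@[simp] theorem monomial_nil : monomial e v [] = v := rfl

@[simp] theorem monomial_cons (k : ℕ) (D : List ℕ) :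
    monomial e v (k :: D) = ⁅e k, monomial e v D⁆ := rfl

theorem monomial_replicate_zero (c : ℕ) :
    monomial e v (List.replicate c 0) = (fun x => ⁅e 0, x⁆)^[c] v := by
  induction c with
  | zero => rfl
  | succ c ih => rw [List.replicate_succ, monomial_cons, ih, Function.iterate_succ_apply']

@[simp] theorem evalSum_zero : evalSum e v 0 = 0 := rfl

@[simp] theorem evalSum_add (S T : Multiset (List ℕ)) :
    evalSum e v (S + T) = evalSum e v S + evalSum e v T := by
  simp [evalSum]

@[simp] theorem evalSum_cons (D : List ℕ) (S : Multiset (List ℕ)) :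
    evalSum e v (D ::ₘ S) = monomial e v D + evalSum e v S := by
  simp [evalSum]

theorem evalSum_bind (S : Multiset (List ℕ)) (F : List ℕ → Multiset (List ℕ)) :
    evalSum e v (S.bind F) = (S.map fun D => evalSum e v (F D)).sum := by
  simp [evalSum, Multiset.map_bind, Multiset.sum_bind]

theorem lie_evalSum (x : L) (S : Multiset (List ℕ)) :
    ⁅x, evalSum e v S⁆ = (S.map fun D => ⁅x, monomial e v D⁆).sum := by
  rw [evalSum, ← LieRingModule.toEnd_apply_apply, map_multiset_sum, Multiset.map_map]
  rfl

@[simp] theorem evalSum_map_cons (k : ℕ) (S : Multiset (List ℕ)) :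
    evalSum e v (S.map (k :: ·)) = ⁅e k, evalSum e v S⁆ := by
  rw [lie_evalSum]
  simp [evalSum, Function.comp_def]

theorem evalSum_replicate (c : ℕ) (D : List ℕ) :
    evalSum e v (Multiset.replicate c D) = c • monomial e v D := by
  simp [evalSum]

variable {e v} {h : ℕ → L} {f : L}

theorem lie_monomial_eq_two_nsmul_evalSum_raise (hhe : ∀ d k, ⁅h d, e k⁆ = 2 • e (k + d))
    (hhv : ∀ d, 0 < d → ⁅h d, v⁆ = 0) {d : ℕ} (hd : 0 < d) :
    ∀ D, ⁅h d, monomial e v D⁆ = 2 • evalSum e v (raise d D)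
  | [] => by simp [raise, hhv d hd]
  | k :: D => by
    have hcomm := leibniz_lie (h d) (e k) (monomial e v D)
    rw [hhe, nsmul_lie] at hcomm
    simp only [monomial_cons, raise, evalSum_cons, evalSum_map_cons, hcomm,
      lie_monomial_eq_two_nsmul_evalSum_raise hhe hhv hd D, lie_nsmul, smul_add]

theorem lie_monomial_eq_neg_two_nsmul_evalSum_merge (hhe : ∀ d k, ⁅h d, e k⁆ = 2 • e (k + d))
    (hfe : ∀ k, ⁅f, e k⁆ = -h (k + 1)) (hhv : ∀ d, 0 < d → ⁅h d, v⁆ = 0) (hfv : ⁅f, v⁆ = 0) :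
    ∀ D, ⁅f, monomial e v D⁆ = -(2 • evalSum e v (merge D))
  | [] => by simp [merge, hfv]
  | k :: D => by
    have hcomm := leibniz_lie f (e k) (monomial e v D)
    rw [hfe, neg_lie] at hcomm
    simp only [monomial_cons, merge, evalSum_add, evalSum_map_cons, hcomm,
      lie_monomial_eq_neg_two_nsmul_evalSum_merge hhe hfe hhv hfv D,
      lie_monomial_eq_two_nsmul_evalSum_raise hhe hhv (Nat.succ_pos k) D, lie_neg, lie_nsmul,
      smul_add]
    abel

theorem evalSum_iterMerge_eq_zero [IsAddTorsionFree M] (hhe : ∀ d k, ⁅h d, e k⁆ = 2 • e (k + d))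
    (hfe : ∀ k, ⁅f, e k⁆ = -h (k + 1)) (hhv : ∀ d, 0 < d → ⁅h d, v⁆ = 0) (hfv : ⁅f, v⁆ = 0)
    {m : ℕ} (hv : (fun x => ⁅e 0, x⁆)^[m + 1] v = 0) :
    ∀ r, evalSum e v (iterMerge m r) = 0
  | 0 => by simpa [iterMerge, evalSum, monomial_replicate_zero] using hv
  | r + 1 => by
    have hf : ⁅f, evalSum e v (iterMerge m r)⁆ = 0 := by
      rw [evalSum_iterMerge_eq_zero hhe hfe hhv hfv hv r, lie_zero]
    simp only [lie_evalSum, lie_monomial_eq_neg_two_nsmul_evalSum_merge hhe hfe hhv hfv,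
      Multiset.sum_map_neg, Multiset.sum_map_nsmul, neg_eq_zero, ← evalSum_bind] at hf
    rw [iterMerge_succ]
    exact (nsmul_eq_zero_iff.1 hf).resolve_right two_ne_zero

theorem lie_eq_zero_of_iterate_lie_eq_zero [IsAddTorsionFree M]
    (hhe : ∀ d k, ⁅h d, e k⁆ = 2 • e (k + d)) (hfe : ∀ k, ⁅f, e k⁆ = -h (k + 1))
    (hhv : ∀ d, 0 < d → ⁅h d, v⁆ = 0) (hfv : ⁅f, v⁆ = 0)
    {m : ℕ} (hv : (fun x => ⁅e 0, x⁆)^[m + 1] v = 0) : ⁅e m, v⁆ = 0 := by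
  obtain ⟨c, hc, hS⟩ := iterMerge_self m
  have := evalSum_iterMerge_eq_zero hhe hfe hhv hfv hv m
  rw [hS, evalSum_replicate] at this
  simpa [hc] using this

end LieModule

end CurrentAlgebra

attribute [local instance] LieRing.ofAssociativeRing

namespace Matrix

variable {n R : Type*} [Fintype n] [DecidableEq n] [Ring R]

theorem lie_single_sub_single_single {i j : n} (hij : i ≠ j) (a b : R) :
    ⁅single i i a - single j j a, single i j b⁆ = single i j (a * b + b * a) := by
  rw [Ring.lie_def, sub_mul, mul_sub, single_mul_single_same, single_mul_single_same,
    single_mul_single_of_ne (i := j) (h := hij.symm),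
    single_mul_single_of_ne (i := i) (h := hij.symm), single_add]
  abel

theorem lie_single_single_swap (i j : n) (a b : R) :
    ⁅single j i a, single i j b⁆ = single j j (a * b) - single i i (b * a) := by
  rw [Ring.lie_def, single_mul_single_same, single_mul_single_same]

end Matrix

open CurrentAlgebra Matrix in
theorem stmt_14_general (R : Type) [Ring R] [Algebra ℂ R] (ε : R →ₐ[ℂ] ℂ)
    (n : ℕ) (i j : Fin n) (hij : i ≠ j)
    (M : Type) [AddCommGroup M] [Module ℂ M]
    [LieRingModule (Matrix (Fin n) (Fin n) R) M]
    (m : ℕ) (v : M)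
    (h1 : ∀ a : R, ⁅Matrix.single j i a, v⁆ = 0)
    (h2 : ∀ a : R, ⁅Matrix.single i i a - Matrix.single j j a, v⁆
            = ((m : ℂ) * ε a) • v)
    (h3 : (fun w => ⁅Matrix.single i j (1 : R), w⁆)^[m + 1] v = 0) :
    ∀ P : R, ε P = 0 → ⁅Matrix.single i j (P ^ m), v⁆ = 0 := by
  intro P hP
  have := IsAddTorsionFree.of_isTorsionFree ℂ M
  refine lie_eq_zero_of_iterate_lie_eq_zero (e := fun k => single i j (P ^ k))
    (h := fun d => single i i (P ^ d) - single j j (P ^ d)) (f := single j i P)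
    (fun d k => ?_) (fun k => ?_) (fun d hd => ?_) (h1 P) (by simpa using h3)
  · rw [lie_single_sub_single_single hij, ← pow_add, ← pow_add, add_comm d k, two_nsmul,
      single_add]
  · rw [lie_single_single_swap, neg_sub, ← pow_succ', ← pow_succ]
  · rw [h2, map_pow, hP, zero_pow hd.ne', mul_zero, zero_smul]

theorem stmt_14 (R : Type) [Ring R] [Algebra ℂ R] (ε : R →ₐ[ℂ] ℂ)
    (n : ℕ) (hn : 2 ≤ n) (i j : Fin n) (hij : i ≠ j)
    (M : Type) [AddCommGroup M] [Module ℂ M]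
    [LieRingModule (Matrix (Fin n) (Fin n) R) M]
    [LieModule ℂ (Matrix (Fin n) (Fin n) R) M]
    (m : ℕ) (v : M)
    (h1 : ∀ a : R, ⁅Matrix.single j i a, v⁆ = 0)
    (h2 : ∀ a : R, ⁅Matrix.single i i a - Matrix.single j j a, v⁆
            = ((m : ℂ) * ε a) • v)
    (h3 : (fun w => ⁅Matrix.single i j (1 : R), w⁆)^[m + 1] v = 0) :
    ∀ P : R, ε P = 0 → ⁅Matrix.single i j (P ^ m), v⁆ = 0 :=
  stmt_14_general R ε n i j hij M m v h1 h2 h3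
end

section
/- Let R be an associative unital ℂ-algebra, ε : R → ℂ a ℂ-linear map, c ∈ ℂ, n ≥ 2, and 1 ≤ i ≠ j ≤ n. Let M be a module over the Lie algebra 𝔤𝔩_n(R) and let v ∈ M satisfy (E_{ii}a − E_{jj}a)·v = c·ε(a)·v for all a ∈ R. Suppose P ∈ R satisfies (E_{ij}P)·v = 0. Then: (a) (E_{ij}(PQ + QP))·v = 0 for every Q ∈ R; and (b) if moreover Q lies in the ℂ-linear span of the commutators {xy − yx : x, y ∈ R}, then (E_{ij}(PQ))·v = 0 and (E_{ij}(QP))·v = 0. -/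
/-!
The subspace `N = {X ∈ R | (E_{ij}X)·v = 0}` is a Jordan ideal of `R`: since
`[E_{ii}a − E_{jj}a, E_{ij}X] = E_{ij}(aX + Xa)` and `v` is an eigenvector of `E_{ii}a − E_{jj}a`,
the Jacobi identity gives `(E_{ij}(aX + Xa))·v = 0` whenever `(E_{ij}X)·v = 0`. This is (a).
For (b), a Jordan ideal over a field of characteristic `≠ 2` is stable under right
multiplication by commutators, because
`2P[a,b] = b∘(a∘P) − a∘(b∘P) + (ab)∘P − (ba)∘P` with `x∘y = xy + yx`.
-/

attribute [local instance 100] LieRing.ofAssociativeRing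

/-- An ideal of the Jordan algebra `(R, x ∘ y = xy + yx)`. -/
def Submodule.IsJordanIdeal {k R : Type*} [CommSemiring k] [Semiring R] [Module k R]
    (N : Submodule k R) : Prop :=
  ∀ a x : R, x ∈ N → a * x + x * a ∈ N

namespace Submodule.IsJordanIdeal

variable {k R : Type*} [Field k] [Ring R] [Algebra k R]

variable {N : Submodule k R} (hN : N.IsJordanIdeal) {P : R} (hP : P ∈ N)
include hN hP

theorem mul_commutator_mem [NeZero (2 : k)] (a b : R) : P * (a * b - b * a) ∈ N := by
  have hsum : (2 : k) • (P * (a * b - b * a)) =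
      ((b * (a * P + P * a) + (a * P + P * a) * b) - (a * (b * P + P * b) + (b * P + P * b) * a))
        + ((a * b * P + P * (a * b)) - (b * a * P + P * (b * a))) := by
    rw [two_smul]; noncomm_ring
  have h2 : (2 : k) • (P * (a * b - b * a)) ∈ N := by
    rw [hsum]
    exact add_mem (sub_mem (hN _ _ (hN _ _ hP)) (hN _ _ (hN _ _ hP)))
      (sub_mem (hN _ _ hP) (hN _ _ hP))
  exact (N.smul_mem_iff two_ne_zero).mp h2

theorem mul_mem_right_of_mem_span_commutators [NeZero (2 : k)] {Q : R}
    (hQ : Q ∈ span k {x : R | ∃ a b : R, x = a * b - b * a}) : P * Q ∈ N := by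
  induction hQ using Submodule.span_induction with
  | mem x hx =>
    obtain ⟨a, b, rfl⟩ := hx
    exact hN.mul_commutator_mem hP a b
  | zero => simp
  | add x y _ _ hx hy => simpa [mul_add] using add_mem hx hy
  | smul r x _ hx => simpa [mul_smul_comm] using N.smul_mem r hx

theorem mul_mem_left_of_mem_span_commutators [NeZero (2 : k)] {Q : R}
    (hQ : Q ∈ span k {x : R | ∃ a b : R, x = a * b - b * a}) : Q * P ∈ N := by
  simpa using sub_mem (hN Q P hP) (hN.mul_mem_right_of_mem_span_commutators hP hQ)

end Submodule.IsJordanIdeal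

section LieModule

variable {k R : Type*} [CommRing k] [Ring R] [Algebra k R] {n : Type*} [DecidableEq n]
  [Fintype n] {M : Type*} [AddCommGroup M] [Module k M] [LieRingModule (Matrix n n R) M]
  [LieModule k (Matrix n n R) M]

theorem Matrix.lie_single_sub_single_single_s15 {i j : n} (hij : i ≠ j) (a X : R) :
    ⁅Matrix.single i i a - Matrix.single j j a, Matrix.single i j X⁆ =
      Matrix.single i j (a * X + X * a) := by
  simp only [Ring.lie_def, sub_mul, mul_sub, Matrix.single_mul_single_same,
    Matrix.single_mul_single_of_ne, ne_eq, hij.symm, not_false_eq_true, Matrix.single_add,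
    sub_zero, zero_sub, sub_neg_eq_add]

variable (k R) in
/-- The subspace `{X ∈ R | (E_{ij}X)·v = 0}`. -/
def lieSingleAnnihilator (i j : n) (v : M) : Submodule k R :=
  LinearMap.ker ((LieModule.toEnd k (Matrix n n R) M : Matrix n n R →ₗ[k] Module.End k M).flip v
    ∘ₗ Matrix.singleLinearMap k i j)

theorem mem_lieSingleAnnihilator {i j : n} {v : M} {X : R} :
    X ∈ lieSingleAnnihilator k R i j v ↔ ⁅Matrix.single i j X, v⁆ = 0 :=
  Iff.rfl

theorem isJordanIdeal_lieSingleAnnihilator {i j : n} (hij : i ≠ j) {v : M}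
    (hv : ∀ a : R, ∃ t : k, ⁅Matrix.single i i a - Matrix.single j j a, v⁆ = t • v) :
    (lieSingleAnnihilator k R i j v).IsJordanIdeal := by
  intro a X hX
  rw [mem_lieSingleAnnihilator] at hX ⊢
  obtain ⟨t, ht⟩ := hv a
  rw [← Matrix.lie_single_sub_single_single_s15 hij, lie_lie, hX, ht, lie_smul, hX]
  simp

end LieModule

theorem stmt_15_general (R : Type) [Ring R] [Algebra ℂ R] (ε : R →ₗ[ℂ] ℂ) (c : ℂ)
    (n : ℕ) (i j : Fin n) (hij : i ≠ j)
    (M : Type) [AddCommGroup M] [Module ℂ M]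
    [LieRingModule (Matrix (Fin n) (Fin n) R) M]
    [LieModule ℂ (Matrix (Fin n) (Fin n) R) M]
    (v : M)
    (h2 : ∀ a : R, ⁅Matrix.single i i a - Matrix.single j j a, v⁆
            = (c * ε a) • v)
    (P : R) (hP : ⁅Matrix.single i j P, v⁆ = 0) :
    (∀ Q : R, ⁅Matrix.single i j (P * Q + Q * P), v⁆ = 0)
    ∧ (∀ Q ∈ Submodule.span ℂ {x : R | ∃ a b : R, x = a * b - b * a},
        ⁅Matrix.single i j (P * Q), v⁆ = 0
        ∧ ⁅Matrix.single i j (Q * P), v⁆ = 0) := by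
  have hJ := isJordanIdeal_lieSingleAnnihilator (k := ℂ) hij fun a => ⟨c * ε a, h2 a⟩
  have hPN : P ∈ lieSingleAnnihilator ℂ R i j v := hP
  refine ⟨fun Q => ?_, fun Q hQ => ⟨?_, ?_⟩⟩
  · rw [add_comm]
    exact hJ Q P hPN
  · exact hJ.mul_mem_right_of_mem_span_commutators hPN hQ
  · exact hJ.mul_mem_left_of_mem_span_commutators hPN hQ

theorem stmt_15 (R : Type) [Ring R] [Algebra ℂ R] (ε : R →ₗ[ℂ] ℂ) (c : ℂ)
    (n : ℕ) (hn : 2 ≤ n) (i j : Fin n) (hij : i ≠ j)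
    (M : Type) [AddCommGroup M] [Module ℂ M]
    [LieRingModule (Matrix (Fin n) (Fin n) R) M]
    [LieModule ℂ (Matrix (Fin n) (Fin n) R) M]
    (v : M)
    (h2 : ∀ a : R, ⁅Matrix.single i i a - Matrix.single j j a, v⁆
            = (c * ε a) • v)
    (P : R) (hP : ⁅Matrix.single i j P, v⁆ = 0) :
    (∀ Q : R, ⁅Matrix.single i j (P * Q + Q * P), v⁆ = 0)
    ∧ (∀ Q ∈ Submodule.span ℂ {x : R | ∃ a b : R, x = a * b - b * a},
        ⁅Matrix.single i j (P * Q), v⁆ = 0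
        ∧ ⁅Matrix.single i j (Q * P), v⁆ = 0) :=
  stmt_15_general R ε c n i j hij M v h2 P hP
end

section
/- Let 𝒜 be a commutative unital ℂ-algebra, G a finite group acting on 𝒜 by ℂ-algebra automorphisms, and 𝒜⋊G the associated skew group algebra. Let ε : 𝒜⋊G → ℂ be a ℂ-algebra homomorphism with ε(g) ≠ 0 for all g ∈ G, set 𝒜' = {a ∈ 𝒜 : ∑_{g∈G} g(a) = 0}, and let J_ε be the two-sided ideal of 𝒜⋊G generated by 𝒜' together with the elements g − ε(g)·1 for g ∈ G. Let n ≥ 2, let λ₁ ≥ λ₂ ≥ ⋯ ≥ λ_n be integers, let M be a module over the Lie algebra 𝔤𝔩_n(𝒜⋊G), and let v ∈ M satisfy: (E_{ij}x)·v = 0 for all 1 ≤ i < j ≤ n and all x ∈ 𝒜⋊G; (E_{ii}x − E_{jj}x)·v = (λ_i − λ_j)·ε(x)·v for all i, j and all x ∈ 𝒜⋊G; and the iterated action (E_{ji}1)^{λ_i − λ_j + 1}·v = 0 for all 1 ≤ i < j ≤ n. Then for every x ∈ J_ε one has (E_{ij}x)·v = 0 for all i ≠ j and (E_{ii}x − E_{jj}x)·v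 = 0 for all i, j; that is, 𝔰𝔩_n(ℂ) ⊗ J_ε annihilates v. -/
/-!
Modulo the elements `g - ε(g)`, conjugation by `g` is trivial, so `|G| a ≡ ∑ g(a) = 0` for
`a ∈ 𝒜'`: the ideal `J_ε` is generated by the `g - ε(g)` alone. As `g` has finite order,
`g - ε(g) = (g - ε(g)) (1 - P)` with `P` the projection onto the `ε(g)`-eigenspace of `g`, and
`1 - P` is an idempotent in `ker ε`. Hence, for `p < q`, it suffices that the space of `x` with
`(E_{qp} x) v = 0` contains the idempotents of `ker ε` and is closed under `x a y + y a x`; the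
latter comes from `⁅E_{pq} a, E_{qp} x⁆`. For an idempotent `z ∈ ker ε`, the elements
`E_{pq}(1 - z)` and `E_{qp}(1 - z)` span an `sl₂` for which `v` is primitive of weight
`λ_p - λ_q`, and `E_{qp} z` commutes with it; the integrability condition on
`E_{qp} 1 = E_{qp} z + E_{qp}(1 - z)` then forces `(E_{qp} z) v = 0`. Upper triangular entries
kill `v` by assumption, and diagonal ones because `ε` vanishes on `J_ε`.
-/

attribute [local instance 100] LieRing.ofAssociativeRing

open Finset LieModule

namespace IsSl2Triple.HasPrimitiveVectorWith

section CommRing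

variable {R L M : Type*} [CommRing R] [LieRing L] [LieAlgebra R L]
  [AddCommGroup M] [Module R M] [LieRingModule L M] [LieModule R L M]
  {h e f : L} {t : IsSl2Triple h e f} {m : M} {μ : R}

lemma pow_toEnd_e_pow_toEnd_f (P : HasPrimitiveVectorWith t m μ) (l : ℕ) :
    (toEnd R L M e ^ l) ((toEnd R L M f ^ l) m)
      = (∏ i ∈ range l, ((i + 1) * (μ - i))) • m := by
  induction l with
  | zero => simp
  | succ l ih =>
    rw [pow_succ, Module.End.mul_apply, toEnd_apply_apply, P.lie_e_pow_succ_toEnd_f, map_smul, ih,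
      smul_smul, prod_range_succ, mul_comm]

lemma pow_toEnd_e_pow_toEnd_f_of_lt (P : HasPrimitiveVectorWith t m μ) {k l : ℕ} (hlk : l < k) :
    (toEnd R L M e ^ k) ((toEnd R L M f ^ l) m) = 0 := by
  obtain ⟨j, rfl⟩ : ∃ j, k = j + 1 + l := ⟨k - l - 1, by omega⟩
  rw [pow_add, Module.End.mul_apply, pow_toEnd_e_pow_toEnd_f P, map_smul, pow_succ,
    Module.End.mul_apply, toEnd_apply_apply, P.lie_e, map_zero, smul_zero]

lemma pow_toEnd_e_pow_succ_toEnd_f_of_eq_nat {n : ℕ} (P : HasPrimitiveVectorWith t m (n : R))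
    (hn : n ≠ 0) : (toEnd R L M e ^ n) ((toEnd R L M f ^ (n + 1)) m) = 0 := by
  obtain ⟨k, rfl⟩ := Nat.exists_eq_succ_of_ne_zero hn
  rw [pow_succ, Module.End.mul_apply, toEnd_apply_apply, P.lie_e_pow_succ_toEnd_f, sub_self,
    mul_zero, zero_smul, map_zero]

end CommRing

variable {K L M : Type*} [Field K] [CharZero K] [LieRing L] [LieAlgebra K L]
  [AddCommGroup M] [Module K M] [LieRingModule L M] [LieModule K L M]
  {h e f : L} {t : IsSl2Triple h e f} {m : M}

/-- Applying `e ^ n` to `(g + f) ^ (n + 1) m` leaves only the term `(n + 1) • g (e ^ n f ^ n m)`,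
a nonzero multiple of `⁅g, m⁆`. -/
lemma lie_eq_zero_of_pow_toEnd_add_f_eq_zero {n : ℕ} (P : HasPrimitiveVectorWith t m (n : K))
    (hn : n ≠ 0) {g : L} (hgf : ⁅g, f⁆ = 0) (heg : ⁅e, g⁆ = 0)
    (hnil : (toEnd K L M (g + f) ^ (n + 1)) m = 0) : ⁅g, m⁆ = 0 := by
  set φ := toEnd K L M
  have hφgf : Commute (φ g) (φ f) :=
    commute_iff_lie_eq.mpr (by rw [← LieHom.map_lie, hgf, map_zero])
  have hφeg : Commute (φ e ^ n) (φ g) :=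
    (commute_iff_lie_eq.mpr (by rw [← LieHom.map_lie, heg, map_zero])).pow_left n
  have hterm : ∀ k ∈ range (n + 2), k ≠ 1 →
      (n + 1).choose k • (φ g ^ k) ((φ e ^ n) ((φ f ^ (n + 1 - k)) m)) = 0 := by
    intro k hk hk1
    rcases Nat.lt_or_gt_of_ne hk1 with hk0 | hk2
    · rw [Nat.lt_one_iff.mp hk0, Nat.sub_zero, pow_toEnd_e_pow_succ_toEnd_f_of_eq_nat P hn,
        map_zero, smul_zero]
    · rw [pow_toEnd_e_pow_toEnd_f_of_lt P (by omega), map_zero, smul_zero]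
  have hexpand : (φ e ^ n) ((φ (g + f) ^ (n + 1)) m) = ∑ k ∈ range (n + 2),
      (n + 1).choose k • (φ g ^ k) ((φ e ^ n) ((φ f ^ (n + 1 - k)) m)) := by
    rw [map_add, hφgf.add_pow, ← Module.End.mul_apply, Finset.mul_sum, LinearMap.sum_apply]
    refine sum_congr rfl fun k _ => ?_
    simp only [Module.End.mul_apply, Module.End.natCast_apply, map_nsmul]
    rw [← Module.End.mul_apply (φ e ^ n), (hφeg.pow_right k).eq, Module.End.mul_apply]
  rw [hnil, map_zero, sum_eq_single_of_mem 1 (by simp) hterm, pow_one, Nat.add_sub_cancel,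
    pow_toEnd_e_pow_toEnd_f P, map_smul, ← Nat.cast_smul_eq_nsmul K, smul_smul] at hexpand
  refine (smul_eq_zero.mp hexpand.symm).resolve_left (mul_ne_zero ?_ ?_)
  · simpa using Nat.cast_add_one_ne_zero n
  · refine prod_ne_zero_iff.mpr fun i hi => mul_ne_zero (Nat.cast_add_one_ne_zero i) ?_
    exact sub_ne_zero.mpr (by exact_mod_cast (mem_range.mp hi).ne')

end IsSl2Triple.HasPrimitiveVectorWith

section LieBracket

variable {R L M : Type*} [CommRing R] [LieRing L] [LieAlgebra R L]
  [AddCommGroup M] [Module R M] [LieRingModule L M] [LieModule R L M]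

lemma lie_lie_eq_zero_of_lie_eq_smul {x y : L} {v : M} {c : R} (hx : ⁅x, v⁆ = c • v)
    (hy : ⁅y, v⁆ = 0) : ⁅⁅x, y⁆, v⁆ = 0 := by
  rw [lie_lie, hy, hx, lie_zero, lie_smul, hy, smul_zero, sub_zero]

end LieBracket

namespace Matrix

variable {ι S : Type*} [Fintype ι] [DecidableEq ι] [Ring S] {p q : ι}

lemma lie_single_single (a x : S) :
    ⁅single p q a, single q p x⁆ = single p p (a * x) - single q q (x * a) := by
  rw [Ring.lie_def, single_mul_single_same, single_mul_single_same]

lemma lie_single_sub_single_single_s17 (hpq : p ≠ q) (a b x : S) :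
    ⁅single p p a - single q q b, single q p x⁆ = -single q p (b * x + x * a) := by
  simp [Ring.lie_def, sub_mul, mul_sub, hpq, single_add]
  abel

lemma isSl2Triple_single (hpq : p ≠ q) {z : S} (hz : IsIdempotentElem z) (hz0 : z ≠ 0) :
    IsSl2Triple (single p p z - single q q z) (single p q z) (single q p z) where
  h_ne_zero h := hz0 (by simpa [single_apply, hpq.symm] using congr_fun (congr_fun h p) p)
  lie_e_f := by rw [lie_single_single, hz.eq]
  lie_h_e_nsmul := by
    simp [Ring.lie_def, sub_mul, mul_sub, hpq.symm, hz.eq, two_mul, single_add]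
  lie_h_f_nsmul := by rw [lie_single_sub_single_single_s17 hpq, hz.eq, two_nsmul, single_add]

end Matrix

namespace IsIdempotentElem

variable {S : Type*} [Ring S] {z : S}

lemma add_of_mul_self_eq_zero {w : S} (hz : IsIdempotentElem z) (hw : w * w = 0)
    (hzw : z * w + w * z = w) : IsIdempotentElem (z + w) := by
  rw [IsIdempotentElem, add_mul, mul_add, mul_add, hz.eq, hw, add_zero, add_assoc, hzw]

lemma add_one_sub_mul_mul (hz : IsIdempotentElem z) (a : S) :
    IsIdempotentElem (z + (1 - z) * a * z) := by
  refine hz.add_of_mul_self_eq_zero ?_ ?_ <;> simp only [mul_assoc]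
  · rw [← mul_assoc z (1 - z), hz.mul_one_sub_self, zero_mul, mul_zero, mul_zero]
  · rw [← mul_assoc z (1 - z), hz.mul_one_sub_self, zero_mul, zero_add, hz.eq]

lemma add_mul_mul_one_sub (hz : IsIdempotentElem z) (a : S) :
    IsIdempotentElem (z + z * a * (1 - z)) := by
  refine hz.add_of_mul_self_eq_zero ?_ ?_ <;> simp only [mul_assoc]
  · rw [← mul_assoc (1 - z) z, hz.one_sub_mul_self, zero_mul, mul_zero, mul_zero]
  · rw [hz.one_sub_mul_self, mul_zero, mul_zero, add_zero, ← mul_assoc, hz.eq]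

end IsIdempotentElem

lemma mul_geom_sum_eq_of_pow_eq_one {S : Type*} [Ring S] {w : S} {d : ℕ} (hw : w ^ d = 1)
    (k : ℕ) :
    w ^ k * ∑ i ∈ range d, w ^ i = ∑ i ∈ range d, w ^ i := by
  have hw' : w * ∑ i ∈ range d, w ^ i = ∑ i ∈ range d, w ^ i := by
    rw [← sub_eq_zero, ← sub_one_mul, mul_geom_sum, hw, sub_self]
  induction k with
  | zero => rw [pow_zero, one_mul]
  | succ k ih => rw [pow_succ, mul_assoc, hw', ih]

section Character

variable {K S : Type*} [Field K] [CharZero K] [Ring S] [Algebra K S]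

/-- The average of the powers of `(ε u)⁻¹ • u` projects onto the `ε u`-eigenspace of `u`. -/
lemma exists_isIdempotentElem_sub_algebraMap_mul_eq_zero (ε : S →ₐ[K] K) {u : S} {d : ℕ}
    (hd : d ≠ 0) (hu : u ^ d = 1) :
    ∃ P : S, IsIdempotentElem P ∧ ε P = 1 ∧ (u - algebraMap K S (ε u)) * P = 0 := by
  set c := ε u
  have hc : c ≠ 0 := by
    rintro hc
    simpa [c, hc, hd] using congrArg ε hu
  set w := c⁻¹ • u
  have hw : w ^ d = 1 := by
    rw [smul_pow, hu, inv_pow, ← map_pow, hu, map_one, inv_one, one_smul]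
  set s := ∑ i ∈ range d, w ^ i
  have hss : s * s = (d : K) • s := by
    rw [sum_mul, sum_congr rfl fun k _ => mul_geom_sum_eq_of_pow_eq_one hw k, sum_const,
      card_range, Nat.cast_smul_eq_nsmul]
  refine ⟨(d : K)⁻¹ • s, ?_, ?_, ?_⟩
  · rw [IsIdempotentElem, smul_mul_smul_comm, hss, smul_smul, inv_mul_cancel_right₀ (by simpa)]
  · simp [s, w, c, hc, hd]
  · have : u - algebraMap K S c = c • (w - 1) := by
      rw [smul_sub, smul_smul, mul_inv_cancel₀ hc, one_smul, Algebra.algebraMap_eq_smul_one]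
    rw [this, mul_smul_comm, smul_mul_assoc, sub_one_mul, ← pow_one w,
      mul_geom_sum_eq_of_pow_eq_one hw 1, sub_self, smul_zero, smul_zero]

end Character

section TripleClosed

variable {K S : Type*} [Field K] [CharZero K] [Ring S] [Algebra K S] {N : Submodule K S}

lemma mul_mul_self_mem (hN : ∀ x ∈ N, ∀ y ∈ N, ∀ a, x * a * y + y * a * x ∈ N) {x : S}
    (hx : x ∈ N) (a : S) : x * a * x ∈ N := by
  have h2 := hN x hx x hx a
  rwa [← two_smul K, Submodule.smul_mem_iff N two_ne_zero] at h2

/-- Peirce decomposition: `z a = z a z + z a (1 - z)`, and `z + z a (1 - z)` is again an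
idempotent in `ker ε`; symmetrically for `a z`. -/
lemma mul_mul_mem_of_isIdempotentElem (ε : S →ₐ[K] K)
    (hN : ∀ x ∈ N, ∀ y ∈ N, ∀ a, x * a * y + y * a * x ∈ N)
    (hidem : ∀ z, IsIdempotentElem z → ε z = 0 → z ∈ N) {z : S} (hz : IsIdempotentElem z)
    (hεz : ε z = 0) (a b : S) : a * z * b ∈ N := by
  have hzN := hidem z hz hεz
  have hright : z * b ∈ N := by
    have h := sub_mem (hidem _ (hz.add_mul_mul_one_sub b) (by simp [hεz])) hzN
    rw [add_sub_cancel_left] at h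
    simpa [mul_sub, sub_add_cancel] using add_mem (mul_mul_self_mem hN hzN b) h
  have hleft : a * z ∈ N := by
    have h := sub_mem (hidem _ (hz.add_one_sub_mul_mul a) (by simp [hεz])) hzN
    rw [add_sub_cancel_left] at h
    simpa [sub_mul, add_sub_cancel] using add_mem (mul_mul_self_mem hN hzN a) h
  have h := sub_mem (hN _ hleft _ hright 1) (mul_mul_self_mem hN hzN (b * a))
  simpa [mul_assoc, hz.mul_self_mul] using h

lemma mem_of_mem_span_sub_algebraMap (ε : S →ₐ[K] K)
    (hN : ∀ x ∈ N, ∀ y ∈ N, ∀ a, x * a * y + y * a * x ∈ N)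
    (hidem : ∀ z, IsIdempotentElem z → ε z = 0 → z ∈ N) {G : Type*} [Group G] [Finite G]
    (ι : G →* S) {x : S}
    (hx : x ∈ TwoSidedIdeal.span {s | ∃ g, s = ι g - algebraMap K S (ε (ι g))}) :
    x ∈ N := by
  rw [TwoSidedIdeal.mem_span_iff_mem_addSubgroup_closure] at hx
  refine (AddSubgroup.closure_le N.toAddSubgroup).mpr ?_ hx
  rintro _ ⟨_, ⟨a, -, _, ⟨g, rfl⟩, rfl⟩, b, -, rfl⟩
  dsimp only
  obtain ⟨P, hP, hεP, hgP⟩ := exists_isIdempotentElem_sub_algebraMap_mul_eq_zero ε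
    (orderOf_pos g).ne' (by rw [← map_pow ι, pow_orderOf_eq_one, map_one])
  have hg : a * (ι g - algebraMap K S (ε (ι g))) * b
      = a * (ι g - algebraMap K S (ε (ι g))) * (1 - P) * b := by
    rw [mul_assoc a _ (1 - P), mul_one_sub, hgP, sub_zero]
  rw [hg]
  exact mul_mul_mem_of_isIdempotentElem ε hN hidem hP.one_sub (by simp [hεP]) _ _

end TripleClosed

section Annihilator

variable (K : Type*) {S ι M : Type*} [Field K] [Ring S] [Algebra K S] [Fintype ι] [DecidableEq ι]
  [AddCommGroup M] [Module K M] [LieRingModule (Matrix ι ι S) M] [LieModule K (Matrix ι ι S) M]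

open Matrix

def singleAnnihilator (i j : ι) (v : M) : Submodule K S where
  carrier := {x | ⁅single i j x, v⁆ = 0}
  add_mem' hx hy := by simp_all [single_add, add_lie]
  zero_mem' := by simp
  smul_mem' c x hx := by simp_all [← smul_single, smul_lie]

variable {K} {p q : ι} {v : M}

lemma mem_singleAnnihilator {i j : ι} {x : S} :
    x ∈ singleAnnihilator K i j v ↔ ⁅single i j x, v⁆ = 0 :=
  Iff.rfl

lemma mul_mul_add_mul_mul_mem_singleAnnihilator (hpq : p ≠ q)
    (hup : ∀ a : S, ⁅single p q a, v⁆ = 0) {x y : S} (hx : x ∈ singleAnnihilator K q p v)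
    (hy : y ∈ singleAnnihilator K q p v) (a : S) :
    x * a * y + y * a * x ∈ singleAnnihilator K q p v := by
  have hD : ⁅single p p (a * x) - single q q (x * a), v⁆ = (0 : K) • v := by
    rw [← lie_single_single, zero_smul]
    exact lie_lie_eq_zero_of_lie_eq_smul (c := (0 : K)) (by rw [hup, zero_smul]) hx
  have h := lie_lie_eq_zero_of_lie_eq_smul hD hy
  rwa [lie_single_sub_single_single_s17 hpq, neg_lie, neg_eq_zero, ← mul_assoc y] at h

lemma mem_singleAnnihilator_of_isIdempotentElem [CharZero K] (hpq : p ≠ q) (ε : S →ₐ[K] K)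
    {m : ℕ} (hup : ∀ a : S, ⁅single p q a, v⁆ = 0)
    (hdiag : ∀ a : S, ⁅single p p a - single q q a, v⁆ = ((m : K) * ε a) • v)
    (hlow : (LieModule.toEnd K (Matrix ι ι S) M (single q p 1) ^ (m + 1)) v = 0)
    {z : S} (hz : IsIdempotentElem z) (hεz : ε z = 0) : z ∈ singleAnnihilator K q p v := by
  rcases eq_or_ne v 0 with rfl | hv
  · simp [mem_singleAnnihilator]
  rcases eq_or_ne m 0 with rfl | hm
  · have h1 : (1 : S) ∈ singleAnnihilator K q p v :=
      mem_singleAnnihilator.mpr (by simpa using hlow)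
    simpa using mul_mul_self_mem
      (fun x hx y hy => mul_mul_add_mul_mul_mem_singleAnnihilator hpq hup hx hy) h1 z
  have hεz' : ε (1 - z) = 1 := by simp [hεz]
  have t := isSl2Triple_single hpq hz.one_sub (by rintro h; simp [h] at hεz')
  have P : t.HasPrimitiveVectorWith v (m : K) := ⟨hv, by rw [hdiag, hεz', mul_one], hup _⟩
  refine P.lie_eq_zero_of_pow_toEnd_add_f_eq_zero hm ?_ ?_ ?_
  · simp [Ring.lie_def, hpq]
  · rw [lie_single_single, hz.one_sub_mul_self, hz.mul_one_sub_self, single_zero, single_zero,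
      sub_zero]
  · rwa [← single_add, add_sub_cancel]

end Annihilator

namespace TwoSidedIdeal

variable {K S : Type*} [Field K] [Ring S] [Algebra K S] (I : TwoSidedIdeal S)

lemma mul_mul_sub_mem {u w : S} (hwu : w * u = 1) {c : K} (hu : u - algebraMap K S c ∈ I)
    (y : S) : u * y * w - y ∈ I := by
  have h : u * y * w - y
      = (u - algebraMap K S c) * (y * w) - (y * w) * (u - algebraMap K S c) := by
    rw [sub_mul, mul_sub, Algebra.commutes, mul_assoc y w u, hwu, mul_one, mul_assoc]
    abel
  rw [h]
  exact I.sub_mem (I.mul_mem_right _ _ hu) (I.mul_mem_left _ _ hu)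

lemma mem_of_sum_mul_mul_inv_mem [CharZero K] {G : Type*} [Group G] [Fintype G] (ι : G →* S)
    (χ : G → K) (hI : ∀ g, ι g - algebraMap K S (χ g) ∈ I) {y : S}
    (hy : ∑ g, ι g * y * ι g⁻¹ ∈ I) : y ∈ I := by
  have hsum : ∑ g, (ι g * y * ι g⁻¹ - y) ∈ I :=
    sum_mem fun g _ => I.mul_mul_sub_mem (by rw [← map_mul, inv_mul_cancel, map_one]) (hI g) y
  rw [sum_sub_distrib, sub_eq_add_neg] at hsum
  have hcard := I.mul_mem_left (algebraMap K S (Fintype.card G : K)⁻¹) _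
    (I.neg_mem ((add_mem_cancel_left hy).mp hsum))
  rwa [sum_const, card_univ, neg_neg, ← Algebra.smul_def, ← Nat.cast_smul_eq_nsmul K, smul_smul,
    inv_mul_cancel₀ (by simp), one_smul] at hcard

lemma span_image_union_le_span [CharZero K] {A G : Type*} [Semiring A] [Group G] [Fintype G]
    [SMul G A] (ιA : A →+* S) (ιG : G →* S)
    (hcomm : ∀ g a, ιG g * ιA a = ιA (g • a) * ιG g)
    (χ : G → K) :
    span (ιA '' {a | ∑ g : G, g • a = 0} ∪ {s | ∃ g, s = ιG g - algebraMap K S (χ g)})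
      ≤ span {s | ∃ g, s = ιG g - algebraMap K S (χ g)} := by
  set I := span {s | ∃ g, s = ιG g - algebraMap K S (χ g)}
  rw [span_le]
  rintro _ (⟨a, ha, rfl⟩ | hs)
  · refine I.mem_of_sum_mul_mul_inv_mem ιG χ (fun g => subset_span ⟨g, rfl⟩) ?_
    have hconj : ∑ g, ιG g * ιA a * ιG g⁻¹ = ιA (∑ g : G, g • a) := by
      simp_rw [hcomm, mul_assoc, ← map_mul, mul_inv_cancel, map_one, mul_one, map_sum]
    rw [hconj, (ha : ∑ g : G, g • a = 0), map_zero]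
    exact I.zero_mem
  · exact subset_span hs

end TwoSidedIdeal

theorem stmt_17_general (𝒜 : Type) [CommRing 𝒜] [Algebra ℂ 𝒜]
    (G : Type) [Group G] [Fintype G]
    [MulSemiringAction G 𝒜]
    (S : Type) [Ring S] [Algebra ℂ S]
    (ιA : 𝒜 →ₐ[ℂ] S) (ιG : G →* S)
    (hcomm : ∀ (g : G) (a : 𝒜), ιG g * ιA a = ιA (g • a) * ιG g)
    (ε : S →ₐ[ℂ] ℂ)
    (J : TwoSidedIdeal S)
    (hJ : J = TwoSidedIdeal.span
        ((ιA '' {a : 𝒜 | ∑ g : G, g • a = 0})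
          ∪ {s : S | ∃ g : G, s = ιG g - algebraMap ℂ S (ε (ιG g))}))
    (n : ℕ) (lam : Fin n → ℤ)
    (hlam : ∀ i j : Fin n, i ≤ j → lam j ≤ lam i)
    (M : Type) [AddCommGroup M] [Module ℂ M]
    [LieRingModule (Matrix (Fin n) (Fin n) S) M]
    [LieModule ℂ (Matrix (Fin n) (Fin n) S) M]
    (v : M)
    (hup : ∀ i j : Fin n, i < j → ∀ x : S, ⁅Matrix.single i j x, v⁆ = 0)
    (hdiag : ∀ (i j : Fin n) (x : S),
      ⁅Matrix.single i i x - Matrix.single j j x, v⁆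
        = (((lam i - lam j : ℤ) : ℂ) * ε x) • v)
    (hlow : ∀ i j : Fin n, i < j →
      (fun w => ⁅Matrix.single j i (1 : S), w⁆)^[(lam i - lam j).toNat + 1] v
        = 0) :
    ∀ x ∈ J,
      (∀ i j : Fin n, i ≠ j → ⁅Matrix.single i j x, v⁆ = 0)
      ∧ (∀ i j : Fin n,
          ⁅Matrix.single i i x - Matrix.single j j x, v⁆ = 0) := by
  set I := TwoSidedIdeal.span {s : S | ∃ g : G, s = ιG g - algebraMap ℂ S (ε (ιG g))}
  have hJI : J ≤ I :=
    hJ ▸ TwoSidedIdeal.span_image_union_le_span (ιA : 𝒜 →+* S) ιG hcomm _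
  have hIε : I ≤ TwoSidedIdeal.ker ε := by
    rw [TwoSidedIdeal.span_le]
    rintro _ ⟨g, rfl⟩
    simp [TwoSidedIdeal.mem_ker]
  intro x hx
  refine ⟨fun i j hij => ?_, fun i j => ?_⟩
  · rcases hij.lt_or_gt with h | h
    · exact hup i j h x
    have hm : (((lam j - lam i).toNat : ℕ) : ℂ) = ((lam j - lam i : ℤ) : ℂ) := by
      rw [← Int.cast_natCast, Int.toNat_of_nonneg (sub_nonneg.mpr (hlam j i h.le))]
    refine mem_of_mem_span_sub_algebraMap (N := singleAnnihilator ℂ i j v) ε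
      (fun x hx y hy => mul_mul_add_mul_mul_mem_singleAnnihilator h.ne (hup j i h) hx hy)
      (fun z hz hεz => mem_singleAnnihilator_of_isIdempotentElem h.ne ε (hup j i h)
        (fun a => by rw [hdiag, hm]) (by rw [Module.End.pow_apply]; exact hlow j i h) hz hεz)
      ιG (hJI hx)
  · rw [hdiag, (TwoSidedIdeal.mem_ker ε).mp (hIε (hJI hx)), mul_zero, zero_smul]

theorem stmt_17 (𝒜 : Type) [CommRing 𝒜] [Algebra ℂ 𝒜]
    (G : Type) [Group G] [Fintype G]
    [MulSemiringAction G 𝒜] [SMulCommClass G ℂ 𝒜]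
    (S : Type) [Ring S] [Algebra ℂ S]
    (ιA : 𝒜 →ₐ[ℂ] S) (ιG : G →* S)
    (hcomm : ∀ (g : G) (a : 𝒜), ιG g * ιA a = ιA (g • a) * ιG g)
    (E : (G →₀ 𝒜) ≃ₗ[ℂ] S)
    (hE : ∀ (g : G) (a : 𝒜), E (Finsupp.single g a) = ιA a * ιG g)
    (ε : S →ₐ[ℂ] ℂ) (hε : ∀ g : G, ε (ιG g) ≠ 0)
    (J : TwoSidedIdeal S)
    (hJ : J = TwoSidedIdeal.span
        ((ιA '' {a : 𝒜 | ∑ g : G, g • a = 0})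
          ∪ {s : S | ∃ g : G, s = ιG g - algebraMap ℂ S (ε (ιG g))}))
    (n : ℕ) (hn : 2 ≤ n) (lam : Fin n → ℤ)
    (hlam : ∀ i j : Fin n, i ≤ j → lam j ≤ lam i)
    (M : Type) [AddCommGroup M] [Module ℂ M]
    [LieRingModule (Matrix (Fin n) (Fin n) S) M]
    [LieModule ℂ (Matrix (Fin n) (Fin n) S) M]
    (v : M)
    (hup : ∀ i j : Fin n, i < j → ∀ x : S, ⁅Matrix.single i j x, v⁆ = 0)
    (hdiag : ∀ (i j : Fin n) (x : S),
      ⁅Matrix.single i i x - Matrix.single j j x, v⁆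
        = (((lam i - lam j : ℤ) : ℂ) * ε x) • v)
    (hlow : ∀ i j : Fin n, i < j →
      (fun w => ⁅Matrix.single j i (1 : S), w⁆)^[(lam i - lam j).toNat + 1] v
        = 0) :
    ∀ x ∈ J,
      (∀ i j : Fin n, i ≠ j → ⁅Matrix.single i j x, v⁆ = 0)
      ∧ (∀ i j : Fin n,
          ⁅Matrix.single i i x - Matrix.single j j x, v⁆ = 0) :=
  stmt_17_general 𝒜 G S ιA ιG hcomm ε J hJ n lam hlam M v hup hdiag hlow
end
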